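/- A least generating set can coexist with a closure of size continuum: there exists a countable family 𝒯 = {T_i : i ∈ ω} of complete theories in a countable language with nullary predicates P_i, Q_j (i, j ∈ ω), where T_i contains P_i, ¬P_k for k ≠ i, and the Q_j are realized independently (T_i contains Q_j iff j belongs to a prescribed set S_i ⊆ ω, with {S_i} chosen so that every finite 0-1-pattern on the Q_j is met by infinitely many T_i), such that: (a) each T_i is isolated in Cl_E(𝒯) by P_i, so 𝒯 is the least generating set of Cl_E(𝒯); and (b) |Cl_E(𝒯)| = 2^ℵ₀, witnessed by theories containing all ¬P_i and arbitrary independent combinations of the Q_j. -/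
import Mathlib


open Set

/-- Propositional sentences over atoms `P i`, `Q j` (`i, j ∈ ℕ`) under
conjunction and negation. -/
inductive PropForm : Type where
  | P : ℕ → PropForm
  | Q : ℕ → PropForm
  | conj : PropForm → PropForm → PropForm
  | neg : PropForm → PropForm

/-- Truth value of a sentence under valuations `v` of the `P`-atoms and `w`
of the `Q`-atoms. -/
def PropForm.eval (v w : ℕ → Bool) : PropForm → Bool
  | .P i => v i
  | .Q j => w j
  | .conj a b => a.eval v w && b.eval v w
  | .neg a => !a.eval v w

/-- The complete theory of the valuation pair `(v, w)`. -/
def theoryOf (v w : ℕ → Bool) : Set PropForm := {φ | φ.eval v w = true}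

/-- Complete consistent theories = theories of valuations. -/
def isTh (T : Set PropForm) : Prop := ∃ v w, T = theoryOf v w

def setAt (𝒯 : Set (Set PropForm)) (φ : PropForm) : Set (Set PropForm) :=
  {T ∈ 𝒯 | φ ∈ T}

def ClE (𝒯 : Set (Set PropForm)) : Set (Set PropForm) :=
  𝒯 ∪ {T | isTh T ∧ ∀ φ ∈ T, (setAt 𝒯 φ).Infinite}

def IsLeastGen (𝒮 𝒢 : Set (Set PropForm)) : Prop :=
  𝒢 ⊆ 𝒮 ∧ ClE 𝒢 = 𝒮 ∧
    ∀ 𝒢' : Set (Set PropForm), 𝒢' ⊆ 𝒮 → ClE 𝒢' = 𝒮 → 𝒢 ⊆ 𝒢'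

/-! ### Auxiliary material -/

def PropForm.Patoms : PropForm → Finset ℕ
  | .P i => {i}
  | .Q _ => ∅
  | .conj a b => a.Patoms ∪ b.Patoms
  | .neg a => a.Patoms

def PropForm.Qatoms : PropForm → Finset ℕ
  | .P _ => ∅
  | .Q j => {j}
  | .conj a b => a.Qatoms ∪ b.Qatoms
  | .neg a => a.Qatoms

lemma PropForm.eval_congr {v v' w w' : ℕ → Bool} (φ : PropForm)
    (hv : ∀ i ∈ φ.Patoms, v i = v' i) (hw : ∀ j ∈ φ.Qatoms, w j = w' j) :
    φ.eval v w = φ.eval v' w' := by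
  induction φ with
  | P i => exact hv i (by simp [Patoms])
  | Q j => exact hw j (by simp [Qatoms])
  | conj a b iha ihb =>
      simp only [eval]
      rw [iha (fun i hi => hv i (by simp [Patoms, hi]))
            (fun j hj => hw j (by simp [Qatoms, hj])),
          ihb (fun i hi => hv i (by simp [Patoms, hi]))
            (fun j hj => hw j (by simp [Qatoms, hj]))]
  | neg a ih =>
      simp only [eval]
      rw [ih (fun i hi => hv i (by simpa [Patoms] using hi))
            (fun j hj => hw j (by simpa [Qatoms] using hj))]

lemma mem_theoryOf {v w : ℕ → Bool} {φ : PropForm} :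
    φ ∈ theoryOf v w ↔ φ.eval v w = true := Iff.rfl

/-- There is a natural number whose bits on `F` realize `g`. -/
lemma exists_bits (F : Finset ℕ) (g : ℕ → Bool) :
    ∃ c : ℕ, ∀ j ∈ F, c.testBit j = g j := by
  classical
  induction F using Finset.induction with
  | empty => exact ⟨0, by simp⟩
  | @insert a F ha ih =>
      obtain ⟨c, hc⟩ := ih
      refine ⟨if g a then c ||| 2 ^ a else c.ldiff (2 ^ a), ?_⟩
      intro j hj
      rcases Finset.mem_insert.mp hj with rfl | hj
      · by_cases h : g j <;>
          simp [h, Nat.testBit_lor, Nat.testBit_ldiff, Nat.testBit_two_pow_self]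
      · have hja : j ≠ a := fun h => ha (h ▸ hj)
        by_cases h : g a <;>
          simp [h, Nat.testBit_lor, Nat.testBit_ldiff,
            Nat.testBit_two_pow_of_ne (Ne.symm hja), hc j hj]

/-- Density: every finite bit-pattern is realized by infinitely many naturals. -/
lemma bits_dense (F : Finset ℕ) (g : ℕ → Bool) :
    {i : ℕ | ∀ j ∈ F, i.testBit j = g j}.Infinite := by
  obtain ⟨c, hc⟩ := exists_bits F g
  set N : ℕ := F.sup id + 1 with hN
  have hb : c % 2 ^ N < 2 ^ N := Nat.mod_lt _ (Nat.two_pow_pos N)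
  apply Set.infinite_of_injective_forall_mem
    (f := fun t : ℕ => 2 ^ N * t + c % 2 ^ N)
  case hi =>
    intro s t hst
    simpa [Nat.mul_left_cancel_iff (Nat.two_pow_pos N)] using
      Nat.add_right_cancel hst
  case hf =>
    intro t j hj
    have hjN : j < N := Nat.lt_succ_of_le (Finset.le_sup (f := id) hj)
    rw [Nat.testBit_two_pow_mul_add _ hb, if_pos hjN, Nat.testBit_mod_two_pow]
    simp [hjN, hc j hj]

/-- Example 4.7: there is a countable family `𝒯 = {T_i : i ∈ ω}` of complete
theories (with `P_i ∈ T_i`, `¬P_k ∈ T_i` for `k ≠ i`, and the `Q_j` realized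
independently, every finite pattern being met infinitely often) such that each
`T_i` is isolated in `Cl_E(𝒯)` by `P_i` — so `𝒯` is the least generating set
of `Cl_E(𝒯)` — while `|Cl_E(𝒯)| = 2^ℵ₀`, witnessed by the theories with all
`P_i` false and arbitrary values of the `Q_j`. -/
theorem least_gen_with_continuum_closure :
    ∃ S : ℕ → ℕ → Bool,
      (∀ (F : Finset ℕ) (g : ℕ → Bool),
        {i : ℕ | ∀ j ∈ F, S i j = g j}.Infinite) ∧
      ∀ Tfam : ℕ → Set PropForm,
        (∀ i, Tfam i = theoryOf (fun k => decide (k = i)) (S i)) →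
        (∀ i, PropForm.P i ∈ Tfam i ∧
          (∀ k, k ≠ i → PropForm.neg (PropForm.P k) ∈ Tfam i) ∧
          (∀ j, PropForm.Q j ∈ Tfam i ↔ S i j = true)) ∧
        (∀ i, setAt (ClE (Set.range Tfam)) (PropForm.P i) = {Tfam i}) ∧
        IsLeastGen (ClE (Set.range Tfam)) (Set.range Tfam) ∧
        (∀ w : ℕ → Bool, theoryOf (fun _ => false) w ∈ ClE (Set.range Tfam)) ∧
        Cardinal.mk ↥(ClE (Set.range Tfam)) = Cardinal.continuum := by
  classical
  refine ⟨fun i j => i.testBit j, bits_dense, ?_⟩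
  intro Tfam hT
  -- membership in Tfam i is evaluation
  have hmem : ∀ i (φ : PropForm),
      φ ∈ Tfam i ↔ φ.eval (fun k => decide (k = i)) (fun j => Nat.testBit i j) = true := by
    intro i φ; rw [hT i]; rfl
  have hP : ∀ i i', PropForm.P i ∈ Tfam i' ↔ i = i' := by
    intro i i'; rw [hmem]; simp [PropForm.eval]
  -- Tfam is injective
  have hinj : Function.Injective Tfam := by
    intro i i' h
    have : PropForm.P i ∈ Tfam i' := h ▸ (hP i i).mpr rfl
    exact (hP i i').mp this
  -- basic membership facts
  have hbasic : ∀ i, PropForm.P i ∈ Tfam i ∧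
      (∀ k, k ≠ i → PropForm.neg (PropForm.P k) ∈ Tfam i) ∧
      (∀ j, PropForm.Q j ∈ Tfam i ↔ Nat.testBit i j = true) := by
    intro i
    refine ⟨(hP i i).mpr rfl, fun k hk => ?_, fun j => ?_⟩
    · rw [hmem]; simp [PropForm.eval, hk]
    · rw [hmem]; simp [PropForm.eval]
  -- setAt of range at P i is {Tfam i}
  have hsetAtRange : ∀ i, setAt (Set.range Tfam) (PropForm.P i) = {Tfam i} := by
    intro i
    ext T
    constructor
    · rintro ⟨⟨i', rfl⟩, hp⟩
      have := (hP i i').mp hp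
      simp [this]
    · rintro rfl
      exact ⟨⟨i, rfl⟩, (hP i i).mpr rfl⟩
  -- the isolation property
  have hiso : ∀ i, setAt (ClE (Set.range Tfam)) (PropForm.P i) = {Tfam i} := by
    intro i
    ext T
    constructor
    · rintro ⟨hT', hp⟩
      rcases hT' with ⟨i', rfl⟩ | ⟨_, hall⟩
      · have := (hP i i').mp hp; simp [this]
      · exfalso
        have hfin : (setAt (Set.range Tfam) (PropForm.P i)).Finite := by
          rw [hsetAtRange i]; exact Set.finite_singleton _
        exact (hall _ hp) hfin
    · rintro rfl
      exact ⟨Or.inl ⟨i, rfl⟩, (hP i i).mpr rfl⟩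
  -- density for theories: any φ true in (all-false, w) lies in infinitely many Tfam i
  have hdense : ∀ (w : ℕ → Bool) (φ : PropForm),
      φ.eval (fun _ => false) w = true → (setAt (Set.range Tfam) φ).Infinite := by
    intro w φ hφ
    set N : ℕ := φ.Patoms.sup id + 1 with hNdef
    have hIset : {i : ℕ | ∀ j ∈ φ.Qatoms, Nat.testBit i j = w j}.Infinite :=
      bits_dense φ.Qatoms w
    have hIset2 : ({i : ℕ | ∀ j ∈ φ.Qatoms, Nat.testBit i j = w j} \
        {i : ℕ | i < N}).Infinite :=
      hIset.diff (Set.finite_Iio N)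
    have key : ∀ i ∈ {i : ℕ | ∀ j ∈ φ.Qatoms, Nat.testBit i j = w j} \
        {i : ℕ | i < N}, Tfam i ∈ setAt (Set.range Tfam) φ := by
      rintro i ⟨hq, hge⟩
      have hgeN : N ≤ i := not_lt.mp hge
      refine ⟨⟨i, rfl⟩, ?_⟩
      rw [hmem]
      rw [φ.eval_congr (v' := fun _ => false) (w' := w) ?_ ?_]
      · exact hφ
      · intro k hk
        have hkN : k < N := Nat.lt_succ_of_le (Finset.le_sup (f := id) hk)
        have : k ≠ i := Nat.ne_of_lt (lt_of_lt_of_le hkN hgeN)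
        simp [this]
      · exact fun j hj => hq j hj
    have himg : (Tfam '' ({i : ℕ | ∀ j ∈ φ.Qatoms, Nat.testBit i j = w j} \
        {i : ℕ | i < N})).Infinite := hIset2.image hinj.injOn
    exact himg.mono (by rintro _ ⟨i, hi, rfl⟩; exact key i hi)
  -- membership of limit theories
  have hlimit : ∀ w : ℕ → Bool,
      theoryOf (fun _ => false) w ∈ ClE (Set.range Tfam) := by
    intro w
    exact Or.inr ⟨⟨_, _, rfl⟩, fun φ hφ => hdense w φ hφ⟩
  refine ⟨hbasic, hiso, ?_, hlimit, ?_⟩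
  · -- least generating set
    refine ⟨Set.subset_union_left, rfl, ?_⟩
    intro 𝒢' hsub hcl
    rintro T ⟨i, rfl⟩
    by_contra hTi
    have hmem' : Tfam i ∈ ClE 𝒢' := by
      rw [hcl]; exact Or.inl ⟨i, rfl⟩
    rcases hmem' with h | ⟨_, hall⟩
    · exact hTi h
    · have hfin : (setAt 𝒢' (PropForm.P i)).Finite := by
        apply Set.Finite.subset (Set.finite_singleton (Tfam i))
        intro T ⟨hT', hp⟩
        have : T ∈ setAt (ClE (Set.range Tfam)) (PropForm.P i) :=
          ⟨hcl ▸ hsub hT', hp⟩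
        rwa [hiso i] at this
      exact (hall _ ((hP i i).mpr rfl)) hfin
  · -- cardinality
    have hle : Cardinal.mk ↥(ClE (Set.range Tfam)) ≤ Cardinal.continuum := by
      have hsub : ClE (Set.range Tfam) ⊆
          Set.range (fun p : (ℕ → Bool) × (ℕ → Bool) => theoryOf p.1 p.2) := by
        rintro T (⟨i, rfl⟩ | ⟨⟨v, w, rfl⟩, -⟩)
        · exact ⟨⟨_, _⟩, (hT i).symm⟩
        · exact ⟨⟨v, w⟩, rfl⟩
      calc Cardinal.mk ↥(ClE (Set.range Tfam))
          ≤ Cardinal.mk ↥(Set.range (fun p : (ℕ → Bool) × (ℕ → Bool) => theoryOf p.1 p.2)) :=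
            Cardinal.mk_le_mk_of_subset hsub
        _ ≤ Cardinal.mk ((ℕ → Bool) × (ℕ → Bool)) := Cardinal.mk_range_le
        _ = Cardinal.continuum := by
            simp [Cardinal.mk_prod, Cardinal.mk_arrow]
    have hge : Cardinal.continuum ≤ Cardinal.mk ↥(ClE (Set.range Tfam)) := by
      have hkey : Function.Injective
          (fun w : ℕ → Bool => (⟨theoryOf (fun _ => false) w, hlimit w⟩ :
            ↥(ClE (Set.range Tfam)))) := by
        intro w w' h
        have h' : theoryOf (fun _ => false) w = theoryOf (fun _ => false) w' :=
          congrArg Subtype.val h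
        funext j
        have : (PropForm.Q j ∈ theoryOf (fun _ => false) w) ↔
            (PropForm.Q j ∈ theoryOf (fun _ => false) w') := by rw [h']
        simpa [mem_theoryOf, PropForm.eval] using this
      calc Cardinal.continuum = Cardinal.mk (ℕ → Bool) := by
            simp [Cardinal.mk_arrow]
        _ ≤ _ := Cardinal.mk_le_of_injective hkey
    exact le_antisymm hle hge
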